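/- arXiv:1612.04465 — 6 statements merged into one kernel-verified Lean document; each statement's English description precedes it below -/
import Mathlib

section
/- For a b-subset s of {1,...,b+c} and its complement s̄ (a c-subset), with extensions by the top block {b+c+1,...,b+c+a}, one has dim V_{s̄,a+b} · dim V_{s,a+c} = |PP(a,b,c)| · dim V_{s̄,b} · dim V_{s,c}, i.e. the explicit Vandermonde identity Δ(s,\,b+c+1,...,b+c+a)·Δ(s̄,\,b+c+1,...,b+c+a) / (Δ(1,...,a+b)·Δ(1,...,a+c)) = |PP(a,b,c)| · Δ(s)Δ(s̄)/(Δ(1,...,b)Δ(1,...,c)). -/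
/-!
Splitting off the top block `T = {b+c+1, …, b+c+a}`, which lies above `{1, …, b+c}`, gives
`Δ(S ∪ T) = Δ(S) Δ(T) ∏_{x ∈ S, y ∈ T} (y - x)`. The cross products of `s` and of `s̄` with `T`
multiply to the cross product of `{1, …, b+c}` with `T`, which no longer depends on `s` and, by the
same splitting, equals `Δ(1, …, a+b+c) / (Δ(1, …, b+c) Δ(1, …, a))`. As `Δ(T) = Δ(1, …, a)`, the
identity reduces to MacMahon's formula in the form
`|PP(a,b,c)| = G(a) G(b) G(c) G(a+b+c) / (G(a+b) G(b+c) G(a+c))` with `G(n) = Δ(1, …, n) = ∏_{k<n} k!`,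
proved by induction on `a`: the layer `i = a` of the box product telescopes to
`a! (a+b+c)! / ((a+b)! (a+c)!)`.
-/

/-- The Vandermonde product `Δ(S) = ∏_{i<j, i,j ∈ S} (j - i)` of a finite set of
natural numbers. -/
def vdm (S : Finset ℕ) : ℚ :=
  ∏ p ∈ S.offDiag.filter (fun p => p.1 < p.2), ((p.2 : ℚ) - (p.1 : ℚ))

/-- The MacMahon box-counting formula for `|PP(a,b,c)|`. -/
def macmahon (a b c : ℕ) : ℚ :=
  ∏ i ∈ Finset.range a, ∏ j ∈ Finset.range b, ∏ k ∈ Finset.range c,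
    ((i + j + k + 2 : ℚ) / (i + j + k + 1 : ℚ))

open Finset
open scoped Nat

lemma vdm_eq_prod_prod (S : Finset ℕ) :
    vdm S = ∏ x ∈ S, ∏ y ∈ S, if x < y then ((y : ℚ) - x) else 1 := by
  have hpairs : S.offDiag.filter (fun p => p.1 < p.2) = (S ×ˢ S).filter (fun p => p.1 < p.2) := by
    ext ⟨x, y⟩
    simp only [mem_filter, mem_offDiag, mem_product]
    exact ⟨fun ⟨⟨hx, hy, _⟩, h⟩ => ⟨⟨hx, hy⟩, h⟩, fun ⟨⟨hx, hy⟩, h⟩ => ⟨⟨hx, hy, h.ne⟩, h⟩⟩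
  rw [vdm, hpairs, prod_filter, prod_product]

lemma vdm_ne_zero (S : Finset ℕ) : vdm S ≠ 0 :=
  prod_ne_zero_iff.2 fun p hp => sub_ne_zero.2 (by exact_mod_cast (mem_filter.1 hp).2.ne')

def vdmCross (S T : Finset ℕ) : ℚ :=
  ∏ x ∈ S, ∏ y ∈ T, ((y : ℚ) - x)

lemma vdm_union_of_lt {S T : Finset ℕ} (h : ∀ x ∈ S, ∀ y ∈ T, x < y) :
    vdm (S ∪ T) = vdm S * vdm T * vdmCross S T := by
  have hdisj : Disjoint S T := disjoint_left.2 fun x hS hT => lt_irrefl x (h x hS x hT)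
  have hST : ∏ x ∈ S, ∏ y ∈ T, (if x < y then ((y : ℚ) - x) else 1)
      = ∏ x ∈ S, ∏ y ∈ T, ((y : ℚ) - x) :=
    prod_congr rfl fun x hx => prod_congr rfl fun y hy => if_pos (h x hx y hy)
  have hTS : ∏ x ∈ T, ∏ y ∈ S, (if x < y then ((y : ℚ) - x) else 1) = 1 :=
    prod_eq_one fun x hx => prod_eq_one fun y hy => if_neg (h y hy x hx).not_gt
  simp only [vdm_eq_prod_prod, vdmCross, prod_union hdisj, prod_mul_distrib, hST, hTS]
  ring

lemma vdm_map_addLeftEmbedding (m : ℕ) (S : Finset ℕ) :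
    vdm (S.map (addLeftEmbedding m)) = vdm S := by
  simp only [vdm_eq_prod_prod, prod_map, addLeftEmbedding_apply, add_lt_add_iff_left,
    Nat.cast_add, add_sub_add_left_eq_sub]

lemma vdm_Icc_add (m n : ℕ) : vdm (Icc (m + 1) (m + n)) = vdm (Icc 1 n) := by
  rw [← map_add_left_Icc, vdm_map_addLeftEmbedding]

lemma prod_Icc_one_sub_eq_factorial (n : ℕ) : ∏ x ∈ Icc 1 n, ((n + 1 : ℚ) - x) = n ! := by
  have hnat : ∏ x ∈ Icc 1 n, (n + 1 - x) = n ! := by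
    have := prod_Ico_reflect (fun x => x) 1 (m := n + 1) (n := n + 1) (by omega)
    rw [← Ico_add_one_right_eq_Icc, this]
    simp
  rw [← hnat, Nat.cast_prod]
  refine prod_congr rfl fun x hx => ?_
  rw [Nat.cast_sub (by have := (mem_Icc.1 hx).2; omega)]
  push_cast; ring

lemma vdm_Icc_one_succ (n : ℕ) : vdm (Icc 1 (n + 1)) = vdm (Icc 1 n) * n ! := by
  have hsplit : Icc 1 (n + 1) = Icc 1 n ∪ {n + 1} := by ext; simp only [mem_Icc, union_singleton, mem_insert]; omega
  rw [hsplit, vdm_union_of_lt (by simp)]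
  simp [vdm_eq_prod_prod, vdmCross, prod_Icc_one_sub_eq_factorial]

lemma prod_range_div_of_ne_zero {G₀ : Type*} [CommGroupWithZero G₀] (f : ℕ → G₀)
    (hf : ∀ k, f k ≠ 0) (n : ℕ) : ∏ i ∈ range n, f (i + 1) / f i = f n / f 0 :=
  prod_range_induction (fun i => f (i + 1) / f i) (fun n => f n / f 0) (div_self (hf 0)) n
    fun k _ => (div_mul_div_cancel₀' (hf k) _ _).symm

lemma macmahon_succ (a b c : ℕ) :
    macmahon (a + 1) b c
      = macmahon a b c * (a ! * (a + b + c)! / ((a + b)! * (a + c)!)) := by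
  have hinner (j : ℕ) : ∏ k ∈ range c, ((a + j + k + 2 : ℚ) / (a + j + k + 1))
      = (a + j + c + 1) / (a + j + 1) := by
    convert prod_range_div_of_ne_zero (fun k : ℕ => (a + j + k + 1 : ℚ)) (fun k => by positivity) c
      using 2 <;> push_cast <;> ring
  have houter : ∏ j ∈ range b, ((a + j + c + 1 : ℚ) / (a + j + 1))
      = (a + b + c)! * a ! / ((a + b)! * (a + c)!) := by
    have hstep (j : ℕ) : ((a + c + (j + 1))! / (a + (j + 1))! : ℚ) / ((a + c + j)! / (a + j)!)
        = (a + j + c + 1) / (a + j + 1) := by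
      rw [← add_assoc, ← add_assoc, Nat.factorial_succ, Nat.factorial_succ]
      push_cast
      field_simp
      ring
    have := prod_range_div_of_ne_zero (fun j : ℕ => ((a + c + j)! / (a + j)! : ℚ))
      (fun j => by positivity) b
    simp only [hstep] at this
    rw [this, add_zero, add_zero, add_right_comm a c b]
    field_simp
  rw [macmahon, prod_range_succ, ← macmahon, prod_congr rfl fun j _ => hinner j, houter]
  ring

theorem macmahon_mul_vdm (a b c : ℕ) :
    macmahon a b c * (vdm (Icc 1 (a + b)) * vdm (Icc 1 (b + c)) * vdm (Icc 1 (a + c)))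
      = vdm (Icc 1 a) * vdm (Icc 1 b) * vdm (Icc 1 c) * vdm (Icc 1 (a + b + c)) := by
  induction a with
  | zero =>
    simp only [macmahon, range_zero, prod_empty, zero_add, Icc_eq_empty_of_lt zero_lt_one,
      show vdm ∅ = 1 from rfl]
    ring
  | succ a ih =>
    rw [macmahon_succ, add_right_comm a 1 b, add_right_comm a 1 c, add_right_comm (a + b) 1 c,
      vdm_Icc_one_succ (a + b), vdm_Icc_one_succ a,
      vdm_Icc_one_succ (a + c), vdm_Icc_one_succ (a + b + c)]
    field_simp
    linear_combination ih

theorem vandermonde_dim_ratio_general (a b c : ℕ) (s : Finset ℕ)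
    (hs : s ⊆ Finset.Icc 1 (b + c)) :
    vdm (s ∪ Finset.Icc (b + c + 1) (b + c + a)) *
        vdm ((Finset.Icc 1 (b + c) \ s) ∪ Finset.Icc (b + c + 1) (b + c + a)) /
        (vdm (Finset.Icc 1 (a + b)) * vdm (Finset.Icc 1 (a + c)))
      = macmahon a b c *
        (vdm s * vdm (Finset.Icc 1 (b + c) \ s) /
          (vdm (Finset.Icc 1 b) * vdm (Finset.Icc 1 c))) := by
  set T := Icc (b + c + 1) (b + c + a)
  have hlt : ∀ x ∈ Icc 1 (b + c), ∀ y ∈ T, x < y := by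
    intro x hx y hy; simp only [T, mem_Icc] at hx hy; omega
  have hunion : Icc 1 (b + c) ∪ T = Icc 1 (a + b + c) := by
    ext; simp only [T, mem_union, mem_Icc]; omega
  have hcross : vdmCross s T * vdmCross (Icc 1 (b + c) \ s) T
      = vdm (Icc 1 (a + b + c)) / (vdm (Icc 1 (b + c)) * vdm (Icc 1 a)) := by
    rw [mul_comm, vdmCross, vdmCross, prod_sdiff hs, ← vdmCross, ← hunion, vdm_union_of_lt hlt,
      vdm_Icc_add]
    field_simp [vdm_ne_zero]
  rw [vdm_union_of_lt fun x hx => hlt x (hs hx),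
    vdm_union_of_lt fun x hx => hlt x (mem_sdiff.1 hx).1, vdm_Icc_add]
  calc _ = vdm s * vdm (Icc 1 (b + c) \ s) * vdm (Icc 1 a) ^ 2
        * (vdmCross s T * vdmCross (Icc 1 (b + c) \ s) T)
        / (vdm (Icc 1 (a + b)) * vdm (Icc 1 (a + c))) := by ring
    _ = _ := by
      rw [hcross]
      field_simp [vdm_ne_zero]
      linear_combination (macmahon_mul_vdm a b c).symm

/-- for a `b`-subset `s` of `{1,…,b+c}` with complement `s̄`, extending
both by the top block `T = {b+c+1,…,b+c+a}`, one has the Vandermonde identity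
`Δ(s ∪ T)·Δ(s̄ ∪ T)/(Δ(1,…,a+b)·Δ(1,…,a+c)) = |PP(a,b,c)|·Δ(s)·Δ(s̄)/(Δ(1,…,b)·Δ(1,…,c))`,
i.e. `dim V_{s̄,a+b} · dim V_{s,a+c} = |PP(a,b,c)| · dim V_{s̄,b} · dim V_{s,c}`. -/
theorem vandermonde_dim_ratio (a b c : ℕ) (s : Finset ℕ)
    (hs : s ⊆ Finset.Icc 1 (b + c)) (hcard : s.card = b) :
    vdm (s ∪ Finset.Icc (b + c + 1) (b + c + a)) *
        vdm ((Finset.Icc 1 (b + c) \ s) ∪ Finset.Icc (b + c + 1) (b + c + a)) /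
        (vdm (Finset.Icc 1 (a + b)) * vdm (Finset.Icc 1 (a + c)))
      = macmahon a b c *
        (vdm s * vdm (Finset.Icc 1 (b + c) \ s) /
          (vdm (Finset.Icc 1 b) * vdm (Finset.Icc 1 c))) :=
  vandermonde_dim_ratio_general a b c s hs
end

section
/- For integers b ≥ 1, c ≥ 0: ∏_{j=1}^{b} ((c+j-1)!/(j-1)!) · det_{1≤j,j'≤b}( 2^{c+j-j'}/(c+j-j')! ) = 2^{bc}, where 1/m! is interpreted as 0 for m < 0. -/
open Finset

private lemma entry_eq (b c : ℕ) (j j' : Fin b) :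
    (if ((c : ℤ) + (j : ℕ) - (j' : ℕ)) < 0 then (0 : ℚ)
      else (2 : ℚ) ^ (((c : ℤ) + (j : ℕ) - (j' : ℕ)).toNat) /
        (Nat.factorial (((c : ℤ) + (j : ℕ) - (j' : ℕ)).toNat) : ℚ))
      = ((2 : ℚ) ^ (c + (j : ℕ)) / (Nat.factorial (c + (j : ℕ)) : ℚ)) *
        (((2 : ℚ)⁻¹) ^ (j' : ℕ) * (Nat.descFactorial (c + (j : ℕ)) (j' : ℕ) : ℚ)) := by
  by_cases h : ((c : ℤ) + (j : ℕ) - (j' : ℕ)) < 0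
  · have hlt : c + (j : ℕ) < (j' : ℕ) := by omega
    rw [if_pos h, Nat.descFactorial_eq_zero_iff_lt.mpr hlt]
    simp
  · have hle : (j' : ℕ) ≤ c + (j : ℕ) := by omega
    have htn : ((c : ℤ) + (j : ℕ) - (j' : ℕ)).toNat = c + (j : ℕ) - (j' : ℕ) := by omega
    rw [if_neg h, htn]
    have hfac : ((c + (j : ℕ) - (j' : ℕ)).factorial : ℚ) *
        (Nat.descFactorial (c + (j : ℕ)) (j' : ℕ) : ℚ) = ((c + (j : ℕ)).factorial : ℚ) := by
      rw [← Nat.cast_mul, Nat.factorial_mul_descFactorial hle]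
    have hpow : (2 : ℚ) ^ (c + (j : ℕ)) = (2 : ℚ) ^ (c + (j : ℕ) - (j' : ℕ)) * 2 ^ (j' : ℕ) := by
      rw [← pow_add]; congr 1; omega
    have h1 : ((c + (j : ℕ) - (j' : ℕ)).factorial : ℚ) ≠ 0 := by
      exact_mod_cast (Nat.factorial_pos _).ne'
    have h2 : ((c + (j : ℕ)).factorial : ℚ) ≠ 0 := by
      exact_mod_cast (Nat.factorial_pos _).ne'
    field_simp [hpow]
    rw [← hfac]
    have hh : ((1:ℚ) / 2) ^ (j' : ℕ) * 2 ^ (j' : ℕ) = 1 := by rw [← mul_pow]; norm_num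
    rw [hpow]
    linear_combination (-((2:ℚ) ^ (c + (j : ℕ) - (j' : ℕ)) * ((c + (j : ℕ) - (j' : ℕ)).factorial : ℚ) * (Nat.descFactorial (c + (j : ℕ)) (j' : ℕ) : ℚ))) * hh

private lemma det_descFactorial (b c : ℕ) :
    (Matrix.of fun j j' : Fin b =>
        (Nat.descFactorial (c + (j : ℕ)) (j' : ℕ) : ℚ)).det
      = ∏ i : Fin b, ((i : ℕ).factorial : ℚ) := by
  have h := Matrix.det_eval_matrixOfPolynomials_eq_det_vandermonde
      (fun i : Fin b => ((c + (i : ℕ) : ℕ) : ℚ))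
      (fun i : Fin b => descPochhammer ℚ (i : ℕ))
      (fun i => descPochhammer_natDegree ℚ (i : ℕ))
      (fun i => monic_descPochhammer ℚ (i : ℕ))
  have heval : (Matrix.of fun (i j : Fin b) =>
      (descPochhammer ℚ (j : ℕ)).eval ((c + (i : ℕ) : ℕ) : ℚ))
      = Matrix.of fun j j' : Fin b => (Nat.descFactorial (c + (j : ℕ)) (j' : ℕ) : ℚ) := by
    ext i j
    rw [Matrix.of_apply, Matrix.of_apply, descPochhammer_eval_eq_descFactorial]
  rw [heval] at h
  rw [← h]
  have hv : (fun i : Fin b => ((c + (i : ℕ) : ℕ) : ℚ)) =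
      fun i : Fin b => ((i : ℕ) : ℚ) + (c : ℚ) := by
    funext i; push_cast; ring
  rw [hv, Matrix.det_vandermonde_add]
  cases b with
  | zero => simp
  | succ n =>
    rw [Matrix.det_vandermonde_id_eq_superFactorial n]
    rw [Fin.prod_univ_eq_prod_range (fun i => ((i.factorial : ℚ)))]
    rw [← Nat.cast_prod, Nat.prod_range_succ_factorial]

/-- for integers `b ≥ 1`, `c ≥ 0`,
`∏_{j=1}^{b} ((c+j-1)!/(j-1)!) · det_{1≤j,j'≤b}( 2^{c+j-j'}/(c+j-j')! ) = 2^{bc}`,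
where `1/m!` is interpreted as `0` for `m < 0`.  (Below, rows and columns are
0-indexed, so the matrix entry at `(j,j')` has exponent `c + j - j'` and the
prefactor is `∏_{j=0}^{b-1} (c+j)!/j!`.) -/
theorem prefactor_times_det_eq_pow (b c : ℕ) (hb : 1 ≤ b) :
    (∏ j ∈ Finset.range b, ((Nat.factorial (c + j) : ℚ) / (Nat.factorial j : ℚ))) *
      Matrix.det (Matrix.of fun j j' : Fin b =>
        if ((c : ℤ) + (j : ℕ) - (j' : ℕ)) < 0 then (0 : ℚ)
        else (2 : ℚ) ^ (((c : ℤ) + (j : ℕ) - (j' : ℕ)).toNat) /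
          (Nat.factorial (((c : ℤ) + (j : ℕ) - (j' : ℕ)).toNat) : ℚ))
      = 2 ^ (b * c) := by
  have hM : (Matrix.of fun j j' : Fin b =>
        if ((c : ℤ) + (j : ℕ) - (j' : ℕ)) < 0 then (0 : ℚ)
        else (2 : ℚ) ^ (((c : ℤ) + (j : ℕ) - (j' : ℕ)).toNat) /
          (Nat.factorial (((c : ℤ) + (j : ℕ) - (j' : ℕ)).toNat) : ℚ))
      = Matrix.of fun j j' : Fin b =>
          ((2 : ℚ) ^ (c + (j : ℕ)) / (Nat.factorial (c + (j : ℕ)) : ℚ)) *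
          ((Matrix.of fun j j' : Fin b => ((2 : ℚ)⁻¹) ^ (j' : ℕ) *
            (Nat.descFactorial (c + (j : ℕ)) (j' : ℕ) : ℚ)) j j') := by
    ext j j'
    exact entry_eq b c j j'
  rw [hM, Matrix.det_mul_column]
  have hrow : (Matrix.of fun j j' : Fin b => ((2 : ℚ)⁻¹) ^ (j' : ℕ) *
        (Nat.descFactorial (c + (j : ℕ)) (j' : ℕ) : ℚ))
      = Matrix.of fun j j' : Fin b => (fun k : Fin b => ((2 : ℚ)⁻¹) ^ (k : ℕ)) j' *
          ((Matrix.of fun j j' : Fin b =>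
            (Nat.descFactorial (c + (j : ℕ)) (j' : ℕ) : ℚ)) j j') := by
    ext j j'; rfl
  rw [hrow, Matrix.det_mul_row, det_descFactorial b c]
  -- now pure product arithmetic
  have hfac0 : ∀ n : ℕ, ((n.factorial : ℚ)) ≠ 0 := fun n => by
    exact_mod_cast (Nat.factorial_pos n).ne'
  have h2 : (2 : ℚ) ≠ 0 := two_ne_zero
  have hp1 : (∏ j ∈ range b, ((j.factorial : ℚ))) ≠ 0 := prod_ne_zero_iff.mpr fun j _ => hfac0 j
  have hp2 : (∏ j ∈ range b, (((c + j).factorial : ℚ))) ≠ 0 :=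
    prod_ne_zero_iff.mpr fun j _ => hfac0 _
  have hsum : ∑ j ∈ range b, (c + j) = b * c + ∑ j ∈ range b, j := by
    rw [Finset.sum_add_distrib, Finset.sum_const, card_range, smul_eq_mul]
  simp only [div_eq_mul_inv, Finset.prod_mul_distrib, Finset.prod_inv_distrib,
    Finset.prod_pow_eq_pow_sum, Fin.prod_univ_eq_prod_range, Fin.sum_univ_eq_sum_range]
  rw [hsum, pow_add]
  rw [Fin.prod_univ_eq_prod_range (fun x => (((c + x).factorial : ℚ))) b,
    Fin.prod_univ_eq_prod_range (fun x => ((x.factorial : ℚ))) b,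
    Fin.sum_univ_eq_sum_range (fun x => x) b]
  field_simp
  rw [← mul_pow]; norm_num
end

section
/- Let s_+ = {s_{+,1} < ... < s_{+,b+1}} ⊆ {1,...,b+c} and fix i with 1 ≤ i ≤ b. Define for each h ∈ {1,...,b+1} the weight W(h) = (½ s_{+,h} − i + 3/2)² + Σ_{m=1}^{b} (½ (s_+ \\ s_{+,h})_m + 1 − m)², where (s_+ \\ s_{+,h})_m denotes the m-th smallest element of s_+ with s_{+,h} removed. Then W(h+1) − W(h) = (h − i + 1/2)(s_{+,h+1} − s_{+,h}), and consequently W has a unique minimum at h = i. -/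
/-!
The weight of the `h`-th term splits into the weight of `B_{i,s_h}` and that of `p_{s ∖ s_h}`.
Passing from `h` to `h + 1` only changes the `B`-factor (from `s_h` to `s_{h+1}`) and the
`h`-th entry of `s ∖ s_h` (from `s_{h+1}` to `s_h`), and the two differences of squares add up to
`(h - i + 1/2)(s_{h+1} - s_h)`. Since `s` is strictly increasing, `W` strictly decreases up to
`h = i` and strictly increases from there on.
-/

open Finset Order

section UniqueMin

variable {α β : Type*} [LinearOrder α] [SuccOrder α] [IsSuccArchimedean α] [Preorder β]
  {f : α → β} {k : α}

theorem apply_lt_apply_of_ne_of_succ_lt_of_lt_succ (hdec : ∀ m < k, f (succ m) < f m)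
    (hinc : ∀ m, k ≤ m → ¬IsMax m → f m < f (succ m)) {j : α} (hj : j ≠ k) : f k < f j := by
  rcases hj.lt_or_gt with hjk | hkj
  · exact strictAntiOn_Iic_of_succ_lt hdec hjk.le le_rfl hjk
  · exact strictMonoOn_of_lt_succ Set.ordConnected_Ici (fun m hm hkm _ ↦ hinc m hkm hm)
      le_rfl hkj.le hkj

theorem Fin.apply_lt_apply_of_ne_of_succ_lt_of_lt_succ {n : ℕ} {f : Fin (n + 1) → β}
    {k : Fin (n + 1)} (hdec : ∀ h : Fin n, h.castSucc < k → f h.succ < f h.castSucc)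
    (hinc : ∀ h : Fin n, k ≤ h.castSucc → f h.castSucc < f h.succ) {j : Fin (n + 1)}
    (hj : j ≠ k) : f k < f j := by
  refine _root_.apply_lt_apply_of_ne_of_succ_lt_of_lt_succ (fun m hmk ↦ ?_) (fun m hkm hm ↦ ?_) hj
  · obtain ⟨h, rfl⟩ := Fin.exists_castSucc_eq.mpr (Fin.ne_last_of_lt hmk)
    rw [Fin.orderSucc_castSucc]
    exact hdec h hmk
  · obtain ⟨h, rfl⟩ := Fin.exists_castSucc_eq.mpr
      fun hm_last ↦ hm (isMax_iff_eq_top.mpr (hm_last.trans (Fin.top_eq_last n).symm))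
    rw [Fin.orderSucc_castSucc]
    exact hinc h hkm

end UniqueMin

theorem Fin.sum_ite_val_lt_succ_sub_sum_ite_val_lt {γ M : Type*} [AddCommGroup M] {n : ℕ}
    (φ : Fin n → γ → M) (x y : Fin n → γ) (h : Fin n) :
    ∑ m, φ m (if (m : ℕ) < h + 1 then x m else y m) -
        ∑ m, φ m (if (m : ℕ) < h then x m else y m) = φ h (x h) - φ h (y h) := by
  rw [← sum_sub_distrib, sum_eq_single h]
  · simp
  · intro m _ hmh
    have hmh : (m : ℕ) ≠ h := Fin.val_ne_of_ne hmh
    rw [if_congr (show (m : ℕ) < h + 1 ↔ (m : ℕ) < h by omega) rfl rfl, sub_self]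
  · simp

/-- The weight of the `h`-th term `B_{i,s_h} p_{s ∖ s_h}`; the `if` enumerates `s ∖ s_h`. -/
def termWeight {K : Type*} [Field K] {b : ℕ} (t : Fin (b + 1) → K) (i : K) (h : Fin (b + 1)) :
    K :=
  (t h / 2 - i + 3 / 2) ^ 2 +
    ∑ m : Fin b, ((if (m : ℕ) < h then t m.castSucc else t m.succ) / 2 + 1 - ((m : ℕ) + 1)) ^ 2

theorem termWeight_succ_sub_castSucc {K : Type*} [Field K] [CharZero K] {b : ℕ}
    (t : Fin (b + 1) → K) (i : K) (h : Fin b) :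
    termWeight t i h.succ - termWeight t i h.castSucc =
      ((h : ℕ) + 1 - i + 1 / 2) * (t h.succ - t h.castSucc) := by
  have hsum := Fin.sum_ite_val_lt_succ_sub_sum_ite_val_lt
    (fun (m : Fin b) u ↦ (u / 2 + 1 - ((m : ℕ) + 1 : K)) ^ 2)
    (fun m ↦ t m.castSucc) (fun m ↦ t m.succ) h
  simp only [termWeight, Fin.val_succ, Fin.val_castSucc] at hsum ⊢
  linear_combination hsum

/-- let `s_+ = {s_{+,1} < … < s_{+,b+1}}` (given by its strictly
increasing enumeration `s : Fin (b+1) → ℕ`, 0-indexed) and fix `i` with `1 ≤ i ≤ b`.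
For `h ∈ {1,…,b+1}` (0-indexed `h : Fin (b+1)`), the weight is
`W(h) = (½ s_{+,h} − i + 3/2)² + ∑_{m=1}^{b} (½ (s_+ \ s_{+,h})_m + 1 − m)²`,
where `(s_+ \ s_{+,h})_m` is the `m`-th smallest element after removing `s_{+,h}`
(namely `s_{+,m}` for `m < h` and `s_{+,m+1}` for `m ≥ h`).  Then consecutive
differences satisfy `W(h+1) − W(h) = (h − i + 1/2)(s_{+,h+1} − s_{+,h})`
(1-indexed `h`), and consequently `W` has a unique minimum at `h = i`
(0-indexed `i - 1`). -/
theorem weight_unique_minimum (b : ℕ) (s : Fin (b + 1) → ℕ) (hs : StrictMono s)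
    (i : ℕ) (hib : i ≤ b)
    (W : Fin (b + 1) → ℚ)
    (hW : ∀ h : Fin (b + 1), W h =
      ((s h : ℚ) / 2 - (i : ℚ) + 3 / 2) ^ 2 +
        ∑ m : Fin b,
          ((if (m : ℕ) < (h : ℕ) then (s m.castSucc : ℚ) else (s m.succ : ℚ)) / 2
            + 1 - ((m : ℕ) + 1 : ℚ)) ^ 2) :
    (∀ h : Fin b, W h.succ - W h.castSucc
        = (((h : ℕ) : ℚ) + 1 - (i : ℚ) + 1 / 2) * ((s h.succ : ℚ) - (s h.castSucc : ℚ))) ∧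
    (∀ h : Fin (b + 1), (h : ℕ) ≠ i - 1 → W ⟨i - 1, by omega⟩ < W h) := by
  obtain rfl : W = termWeight (fun m ↦ (s m : ℚ)) i := funext hW
  have hdiff := termWeight_succ_sub_castSucc (fun m ↦ (s m : ℚ)) i
  have hgap (h : Fin b) : (0 : ℚ) < s h.succ - s h.castSucc :=
    sub_pos.mpr (Nat.cast_lt.mpr (hs Fin.castSucc_lt_succ))
  refine ⟨hdiff, fun j hj ↦ Fin.apply_lt_apply_of_ne_of_succ_lt_of_lt_succ
    (fun h hlt ↦ ?_) (fun h hle ↦ ?_) (Fin.ne_of_val_ne hj)⟩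
  · have hcoef : ((h : ℕ) : ℚ) + 1 - i + 1 / 2 < 0 := by
      have : (h : ℕ) + 2 ≤ i := by simp only [Fin.lt_def, Fin.val_castSucc] at hlt; omega
      linarith [show ((h : ℕ) : ℚ) + 2 ≤ i by exact_mod_cast this]
    linarith [hdiff h, mul_neg_of_neg_of_pos hcoef (hgap h)]
  · have hcoef : 0 < ((h : ℕ) : ℚ) + 1 - i + 1 / 2 := by
      have : i ≤ (h : ℕ) + 1 := by simp only [Fin.le_def, Fin.val_castSucc] at hle; omega
      linarith [show (i : ℚ) ≤ (h : ℕ) + 1 by exact_mod_cast this]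
    linarith [hdiff h, mul_pos hcoef (hgap h)]
end

section
/- Fix a lozenge tiling S of the a×b×c hexagon, let H_+ be the set of full and partial hexagonal faces of the dual honeycomb region, and for each non-horizontal edge γ let f_γ ∈ ℤ^{H_+} be +1 on the face above γ, −1 on the face below γ, and 0 elsewhere. For each horizontal edge γ0 of S with NW, NE, SW, SE neighboring non-horizontal edges, f_{NW} + f_{SE} = f_{NE} + f_{SW}. Consequently the binomial relations B_{i,i+k−a−1}C_{i+k−a−1,k} + B_{i,i+k−a}C_{i+k−a,k} are homogeneous for the ℤ^{H_+}-grading assigning weight f_γ to the variable of edge γ. -/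
/-! Both monomials have weight `e_P - e_Q`: each pair of edges (NW, SW) and (NE, SE) is a path of
two faces from `P` down to `Q`, so its weights telescope. -/

namespace MvPolynomial

theorem isWeightedHomogeneous_X_mul_X_add_X_mul_X {R σ M : Type*} [CommSemiring R]
    [AddCommMonoid M] {w : σ → M} {i j k l : σ} {d : M}
    (hij : w i + w j = d) (hkl : w k + w l = d) :
    IsWeightedHomogeneous w (X i * X j + X k * X l : MvPolynomial σ R) d := by
  subst hij
  refine ((isWeightedHomogeneous_X R w i).mul (isWeightedHomogeneous_X R w j)).add ?_
  rw [← hkl]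
  exact (isWeightedHomogeneous_X R w k).mul (isWeightedHomogeneous_X R w l)

end MvPolynomial

/-- fix a lozenge tiling `S` of the `a×b×c` hexagon and let `H` be the set
of (full and partial) hexagonal faces of the dual honeycomb region.  A horizontal edge
`γ0` of `S` has a face `P` above it, a face `Q` below it, and a face `W` (resp. `E`)
adjacent at its west (resp. east) endpoint; its four neighboring non-horizontal edges
are NW (separating `P` from `W`, with `P` above), NE (separating `P` from `E`, with `P`
above), SW (separating `W` from `Q`, with `W` above) and SE (separating `E` from `Q`,
with `E` above).  With `f_γ ∈ ℤ^{H}` equal to `+1` on the face above `γ`, `−1` on the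
face below `γ`, and `0` elsewhere, the weights of the two monomials
`B_{i,i+k−a−1}C_{i+k−a−1,k}` (edges NW and SW) and `B_{i,i+k−a}C_{i+k−a,k}`
(edges NE and SE) coincide: `f_{NW} + f_{SW} = f_{NE} + f_{SE}` (both equal
`e_P − e_Q`).  Consequently the binomial relation
`X_{NW}·X_{SW} + X_{NE}·X_{SE}` is homogeneous for the `ℤ^{H}`-grading assigning
weight `f_γ` to the variable of edge `γ`. -/
theorem horizontal_edge_grading_homogeneous {H : Type*} [DecidableEq H]
    (P Q W E : H) (fNW fNE fSW fSE : H → ℤ)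
    (hNW : fNW = Pi.single P 1 - Pi.single W 1)
    (hNE : fNE = Pi.single P 1 - Pi.single E 1)
    (hSW : fSW = Pi.single W 1 - Pi.single Q 1)
    (hSE : fSE = Pi.single E 1 - Pi.single Q 1) :
    fNW + fSW = fNE + fSE ∧
    MvPolynomial.IsWeightedHomogeneous
      (fun e : Fin 4 => if e = 0 then fNW else if e = 1 then fNE
        else if e = 2 then fSW else fSE)
      (MvPolynomial.X 0 * MvPolynomial.X 2 + MvPolynomial.X 1 * MvPolynomial.X 3 :
        MvPolynomial (Fin 4) ℤ)
      (Pi.single P 1 - Pi.single Q 1) := by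
  have west : fNW + fSW = Pi.single P 1 - Pi.single Q 1 := by
    rw [hNW, hSW, sub_add_sub_cancel]
  have east : fNE + fSE = Pi.single P 1 - Pi.single Q 1 := by
    rw [hNE, hSE, sub_add_sub_cancel]
  exact ⟨west.trans east.symm,
    MvPolynomial.isWeightedHomogeneous_X_mul_X_add_X_mul_X west east⟩
end

section
/- Let Δ be a pure shellable simplicial complex with shelling order F_1,...,F_m of facets, A its Stanley–Reisner ring, r_i the product of the variables x_j with j ∈ F_i such that F_i \\ {j} is contained in F_1 ∪ ... ∪ F_{i−1}, and M_i = (r_i, r_{i+1}, ..., r_m) ⊆ A. Then for each i, M_i/M_{i+1} is a cyclic A-module generated by the image of r_i, and its annihilator is the prime ideal of the component of Spec A corresponding to the facet F_i (i.e., the ideal generated by the variables not in F_i). -/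
/-!
The restriction face `R i ⊆ F i` (the vertices `v` with `F i \ {v}` in an earlier facet) is not
contained in any earlier facet: by the shelling condition such a facet would contain a ridge
`F i \ {v}` with `v ∈ R i`. Conversely, a face `G` lying in some facet has `R k ⊆ G` for the
first facet `F k ⊇ G`, since otherwise `G ⊆ F k \ {u}` with `u ∈ R k` lies in an earlier one.

For `v ∉ F i`, the face `R i ∪ {v}` is either a non-face, so that `x_v r_i = 0`, or its first
facet `F k` has `k > i`, so that `r_k ∣ x_v r_i`. On the other hand, killing the variables
outside `F i` sends `I_Δ` and every `r_k` with `k > i` to zero but not `r_i`; hence the colon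
ideal lies in the prime `(x_v : v ∉ F i)`.
-/

open MvPolynomial

namespace MvPolynomial

variable {σ R : Type*} [CommRing R]

open Classical in
noncomputable def killVars (s : Set σ) : MvPolynomial σ R →ₐ[R] MvPolynomial σ R :=
  aeval fun v => if v ∈ s then 0 else X v

lemma killVars_X_of_mem {s : Set σ} {v : σ} (hv : v ∈ s) : killVars (R := R) s (X v) = 0 := by
  simp [killVars, hv]

lemma killVars_X_of_notMem {s : Set σ} {v : σ} (hv : v ∉ s) :
    killVars (R := R) s (X v) = X v := by
  simp [killVars, hv]

lemma sub_killVars_mem_span_X_image (s : Set σ) (p : MvPolynomial σ R) :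
    p - killVars s p ∈ Ideal.span (X '' s) := by
  induction p using MvPolynomial.induction_on with
  | C a => simp [killVars]
  | add p q hp hq => rw [map_add, add_sub_add_comm]; exact add_mem hp hq
  | mul_X p v hp =>
    rw [map_mul]
    by_cases hv : v ∈ s
    · rw [killVars_X_of_mem hv, mul_zero, sub_zero]
      exact Ideal.mul_mem_left _ _ (Ideal.subset_span ⟨v, hv, rfl⟩)
    · rw [killVars_X_of_notMem hv, ← sub_mul]
      exact Ideal.mul_mem_right _ _ hp

lemma ker_killVars (s : Set σ) : RingHom.ker (killVars (R := R) s) = Ideal.span (X '' s) := by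
  refine le_antisymm (fun p hp => ?_) ?_
  · simpa [RingHom.mem_ker.1 hp] using sub_killVars_mem_span_X_image s p
  · rw [Ideal.span_le]
    rintro _ ⟨v, hv, rfl⟩
    exact killVars_X_of_mem hv

lemma isPrime_span_X_image [IsDomain R] (s : Set σ) :
    (Ideal.span (X '' s : Set (MvPolynomial σ R))).IsPrime :=
  ker_killVars (R := R) s ▸ RingHom.ker_isPrime _

lemma prod_X_mem_span_X_image {s : Set σ} {T : Finset σ} {v : σ} (hvT : v ∈ T)
    (hvs : v ∈ s) :
    ∏ u ∈ T, X u ∈ Ideal.span (X '' s : Set (MvPolynomial σ R)) := by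
  classical
  rw [← Finset.mul_prod_erase T _ hvT]
  exact Ideal.mul_mem_right _ _ (Ideal.subset_span ⟨v, hvs, rfl⟩)

lemma prod_X_notMem_span_X_image [Nontrivial R] {s : Set σ} {T : Finset σ}
    (hT : ∀ v ∈ T, v ∉ s) :
    ∏ u ∈ T, X u ∉ Ideal.span (X '' s : Set (MvPolynomial σ R)) := by
  rw [← ker_killVars, RingHom.mem_ker, map_prod,
    Finset.prod_congr rfl fun v hv => killVars_X_of_notMem (hT v hv)]
  change ∏ v ∈ T, monomial (Finsupp.single v 1) (1 : R) ≠ 0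
  rw [← monomial_sum_one, Ne, monomial_eq_zero]
  exact one_ne_zero

section Quotient

variable (I : Ideal (MvPolynomial σ R)) {s : Set σ}

lemma span_mk_X_image_eq_map :
    Ideal.span ((fun v => Ideal.Quotient.mk I (X v)) '' s) =
      (Ideal.span (X '' s)).map (Ideal.Quotient.mk I) := by
  rw [Ideal.map_span, Set.image_image]

lemma isPrime_span_mk_X_image [IsDomain R] (hI : I ≤ Ideal.span (X '' s)) :
    (Ideal.span ((fun v => Ideal.Quotient.mk I (X v)) '' s)).IsPrime := by
  have := isPrime_span_X_image (R := R) s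
  rw [span_mk_X_image_eq_map]
  exact Ideal.map_isPrime_of_surjective Ideal.Quotient.mk_surjective (by rwa [Ideal.mk_ker])

lemma mk_prod_X_mem_span_mk_X_image {T : Finset σ} {v : σ} (hvT : v ∈ T) (hvs : v ∈ s) :
    Ideal.Quotient.mk I (∏ u ∈ T, X u) ∈
      Ideal.span ((fun v => Ideal.Quotient.mk I (X v)) '' s) := by
  rw [span_mk_X_image_eq_map]
  exact Ideal.mem_map_of_mem _ (prod_X_mem_span_X_image hvT hvs)

lemma mk_prod_X_notMem_span_mk_X_image [Nontrivial R] (hI : I ≤ Ideal.span (X '' s))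
    {T : Finset σ} (hT : ∀ v ∈ T, v ∉ s) :
    Ideal.Quotient.mk I (∏ u ∈ T, X u) ∉
      Ideal.span ((fun v => Ideal.Quotient.mk I (X v)) '' s) := by
  rw [span_mk_X_image_eq_map, Ideal.mem_quotient_iff_mem hI]
  exact prod_X_notMem_span_X_image hT

end Quotient

noncomputable def stanleyReisnerIdeal {V : Type*} (Δ : Set (Finset V)) :
    Ideal (MvPolynomial V R) :=
  Ideal.span ((fun G : Finset V => ∏ v ∈ G, X v) '' {G | G ∉ Δ})

lemma stanleyReisnerIdeal_le_span_X_image_compl {V : Type*} {Δ : Set (Finset V)}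
    (hdown : ∀ F ∈ Δ, ∀ G ⊆ F, G ∈ Δ) {F : Finset V} (hF : F ∈ Δ) :
    stanleyReisnerIdeal (R := R) Δ ≤ Ideal.span (X '' {v | v ∉ F}) := by
  rw [stanleyReisnerIdeal, Ideal.span_le]
  rintro _ ⟨G, hG, rfl⟩
  obtain ⟨v, hvG, hvF⟩ := Finset.not_subset.1 fun h => hG (hdown F hF G h)
  exact prod_X_mem_span_X_image hvG hvF

end MvPolynomial

namespace Ideal

variable {A : Type*} [CommRing A]

lemma colon_span_singleton_eq_of_isPrime {N : Ideal A} {S : Set A} {y : A}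
    (hprime : (span S).IsPrime) (hN : N ≤ span S) (hy : y ∉ span S)
    (hS : ∀ g ∈ S, g * y ∈ N) : N.colon (span {y}) = span S := by
  refine le_antisymm (fun x hx => ?_) ?_
  · exact (hprime.mem_or_mem (hN (mem_colon_span_singleton.1 hx))).resolve_right hy
  · exact span_le.2 fun g hg => mem_colon_span_singleton.2 (hS g hg)

variable {m : ℕ}

def tail (f : Fin m → A) (n : ℕ) : Ideal A :=
  span {x | ∃ j : Fin m, n ≤ (j : ℕ) ∧ x = f j}

lemma mem_tail (f : Fin m → A) {n : ℕ} {j : Fin m} (h : n ≤ j) : f j ∈ tail f n :=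
  subset_span ⟨j, h, rfl⟩

lemma tail_le_iff (f : Fin m → A) (n : ℕ) (J : Ideal A) :
    tail f n ≤ J ↔ ∀ j : Fin m, n ≤ j → f j ∈ J := by
  refine span_le.trans ⟨fun h j hj => h ⟨j, hj, rfl⟩, ?_⟩
  rintro h _ ⟨j, hj, rfl⟩
  exact h j hj

lemma tail_eq_tail_succ_sup (f : Fin m → A) (i : Fin m) :
    tail f i = tail f (i + 1) ⊔ span {f i} := by
  refine le_antisymm ((tail_le_iff f i _).2 fun j hj => ?_)
    (sup_le ((tail_le_iff f _ _).2 fun j hj => mem_tail f (by omega))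
      (span_le.2 (Set.singleton_subset_iff.2 (mem_tail f le_rfl))))
  rcases hj.lt_or_eq with hij | hij
  · exact mem_sup_left (mem_tail f hij)
  · exact mem_sup_right (Fin.ext hij ▸ mem_span_singleton_self _)

end Ideal

section Shelling

variable {V : Type*} [DecidableEq V] {m d : ℕ} {F : Fin m → Finset V}

def restrictionFace (F : Fin m → Finset V) (i : Fin m) : Finset V :=
  (F i).filter fun v => ∃ j, j < i ∧ (F i).erase v ⊆ F j

structure IsShelling (F : Fin m → Finset V) (d : ℕ) : Prop where
  injective : Function.Injective F
  card_eq : ∀ i, (F i).card = d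
  exists_ridge : ∀ i, ∀ G ⊆ F i, (∃ j, j < i ∧ G ⊆ F j) →
    ∃ G', G ⊆ G' ∧ G' ⊆ F i ∧ G'.card = d - 1 ∧ ∃ j, j < i ∧ G' ⊆ F j

lemma IsShelling.restrictionFace_not_subset (hF : IsShelling F d) {i k : Fin m} (hki : k < i) :
    ¬ restrictionFace F i ⊆ F k := by
  intro hRk
  obtain ⟨G', hRG', hG'F, hcard, j, hji, hG'Fj⟩ :=
    hF.exists_ridge i _ (Finset.filter_subset _ _) ⟨k, hki, hRk⟩
  -- `d - 1 = d` only for `d = 0`, where injectivity rules out the two empty facets `F i`, `F k`.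
  have hne : G' ≠ F i := by
    rintro rfl
    have hd : d = 0 := by have := hF.card_eq i; omega
    have hi := Finset.card_eq_zero.1 ((hF.card_eq i).trans hd)
    have hk := Finset.card_eq_zero.1 ((hF.card_eq k).trans hd)
    exact hki.ne (hF.injective (hk.trans hi.symm))
  obtain ⟨v, hvF, hvG'⟩ := Finset.exists_of_ssubset (hG'F.ssubset_of_ne hne)
  have hG'eq : G' = (F i).erase v :=
    Finset.eq_of_subset_of_card_le (Finset.subset_erase.2 ⟨hG'F, hvG'⟩)
      (by rw [Finset.card_erase_of_mem hvF, hF.card_eq i, hcard])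
  exact hvG' (hRG' (Finset.mem_filter.2 ⟨hvF, j, hji, hG'eq ▸ hG'Fj⟩))

lemma exists_subset_restrictionFace_subset {G : Finset V} {k₀ : Fin m} (h : G ⊆ F k₀) :
    ∃ k, G ⊆ F k ∧ restrictionFace F k ⊆ G := by
  induction k₀ using WellFoundedLT.induction with
  | _ k ih =>
    by_cases hR : restrictionFace F k ⊆ G
    · exact ⟨k, h, hR⟩
    obtain ⟨u, huR, huG⟩ := Finset.not_subset.1 hR
    obtain ⟨-, j, hjk, hj⟩ := Finset.mem_filter.1 huR
    exact ih j hjk ((Finset.subset_erase.2 ⟨h, huG⟩).trans hj)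

lemma IsShelling.exists_lt_restrictionFace_subset_insert (hF : IsShelling F d) {i k₀ : Fin m}
    {v : V} (hv : v ∉ F i) (h : insert v (restrictionFace F i) ⊆ F k₀) :
    ∃ k, i < k ∧ restrictionFace F k ⊆ insert v (restrictionFace F i) := by
  obtain ⟨k, hGk, hRk⟩ := exists_subset_restrictionFace_subset h
  refine ⟨k, lt_of_le_of_ne (not_lt.1 fun hki => ?_) ?_, hRk⟩
  · exact hF.restrictionFace_not_subset hki ((Finset.subset_insert v _).trans hGk)
  · rintro rfl
    exact hv (hGk (Finset.mem_insert_self v _))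

end Shelling

lemma IsShelling.mk_X_mul_mem_tail {V R : Type*} [DecidableEq V] [CommRing R] {m d : ℕ}
    {F : Fin m → Finset V} (hF : IsShelling F d) {Δ : Set (Finset V)}
    (hall : ∀ G ∈ Δ, ∃ i, G ⊆ F i) (i : Fin m) {v : V} (hv : v ∉ F i) :
    Ideal.Quotient.mk (stanleyReisnerIdeal (R := R) Δ) (X v) *
        Ideal.Quotient.mk _ (∏ u ∈ restrictionFace F i, X u) ∈
      Ideal.tail (fun j => Ideal.Quotient.mk _ (∏ u ∈ restrictionFace F j, X u)) (i + 1) := by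
  have hvR : v ∉ restrictionFace F i := fun h => hv (Finset.filter_subset _ _ h)
  rw [← map_mul, ← Finset.prod_insert hvR]
  by_cases hΔ : insert v (restrictionFace F i) ∈ Δ
  · obtain ⟨k₀, hk₀⟩ := hall _ hΔ
    obtain ⟨k, hik, hRk⟩ := hF.exists_lt_restrictionFace_subset_insert hv hk₀
    rw [← Finset.prod_sdiff hRk, map_mul]
    exact Ideal.mul_mem_left _ _ (Ideal.mem_tail _ (Fin.lt_def.1 hik))
  · have hmem :
        ∏ u ∈ insert v (restrictionFace F i), X u ∈ stanleyReisnerIdeal (R := R) Δ :=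
      Ideal.subset_span ⟨_, hΔ, rfl⟩
    rw [Ideal.Quotient.eq_zero_iff_mem.2 hmem]
    exact zero_mem _

theorem stanley_reisner_shelling_general (V : Type*) [DecidableEq V]
    (kk : Type*) [Field kk]
    (Δ : Finset (Finset V))
    (hdown : ∀ F ∈ Δ, ∀ G ⊆ F, G ∈ Δ)
    (m d1 : ℕ) (F : Fin m → Finset V)
    (hFinj : Function.Injective F)
    (hfacet : ∀ i, F i ∈ Δ ∧ ∀ G ∈ Δ, F i ⊆ G → G = F i)
    (hall : ∀ G ∈ Δ, ∃ i, G ⊆ F i)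
    (hpure : ∀ i, (F i).card = d1)
    (hshell : ∀ i : Fin m, ∀ G ⊆ F i, (∃ j, j < i ∧ G ⊆ F j) →
      ∃ G', G ⊆ G' ∧ G' ⊆ F i ∧ G'.card = d1 - 1 ∧ ∃ j, j < i ∧ G' ⊆ F j)
    (I : Ideal (MvPolynomial V kk))
    (hI : I = Ideal.span ((fun G : Finset V => ∏ v ∈ G, X v) '' {G | G ∉ Δ}))
    (r : Fin m → MvPolynomial V kk ⧸ I)
    (hr : ∀ i, r i = Ideal.Quotient.mk I
      (∏ v ∈ (F i).filter (fun v => ∃ j, j < i ∧ (F i).erase v ⊆ F j), X v))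
    (M : ℕ → Ideal (MvPolynomial V kk ⧸ I))
    (hM : ∀ n, M n = Ideal.span {x | ∃ j : Fin m, n ≤ (j : ℕ) ∧ x = r j}) :
    ∀ i : Fin m,
      M i = M ((i : ℕ) + 1) ⊔ Ideal.span {r i} ∧
      Submodule.colon (M ((i : ℕ) + 1)) (Ideal.span {r i})
        = Ideal.span ((fun v => Ideal.Quotient.mk I (X v)) '' {v | v ∉ F i}) ∧
      (Ideal.span ((fun v => Ideal.Quotient.mk I (X v)) '' {v | v ∉ F i})).IsPrime := by
  intro i
  have hF : IsShelling F d1 := ⟨hFinj, hpure, hshell⟩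
  obtain rfl : M = Ideal.tail r := funext hM
  obtain rfl : r = fun j => Ideal.Quotient.mk I (∏ v ∈ restrictionFace F j, X v) := funext hr
  obtain rfl : I = stanleyReisnerIdeal (Δ : Set (Finset V)) := hI
  have hIP := stanleyReisnerIdeal_le_span_X_image_compl (R := kk) hdown (hfacet i).1
  have hprime := isPrime_span_mk_X_image _ hIP
  refine ⟨Ideal.tail_eq_tail_succ_sup _ i, ?_, hprime⟩
  refine Ideal.colon_span_singleton_eq_of_isPrime hprime ?_ ?_ ?_
  · refine (Ideal.tail_le_iff _ _ _).2 fun j hj => ?_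
    obtain ⟨v, hvR, hvF⟩ :=
      Finset.not_subset.1 (hF.restrictionFace_not_subset (Fin.lt_def.2 hj))
    exact mk_prod_X_mem_span_mk_X_image _ hvR hvF
  · exact mk_prod_X_notMem_span_mk_X_image _ hIP fun v hv hvF => hvF (Finset.filter_subset _ _ hv)
  · rintro _ ⟨v, hv, rfl⟩
    exact hF.mk_X_mul_mem_tail hall i hv

/-- let `Δ` be a pure (all facets of cardinality `d1`) shellable
simplicial complex on a vertex set `V`, with shelling order `F 0, …, F (m-1)` of its
facets, `A = k[x_v]/I_Δ` its Stanley–Reisner ring, `r i` the product of the variables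
`x_v` with `v ∈ F i` such that `F i \ {v}` is contained in an earlier facet, and
`M n = (r j : n ≤ j) ⊆ A`.  Then for each `i`, `M i / M (i+1)` is a cyclic `A`-module
generated by the image of `r i` (i.e. `M i = M (i+1) + (r i)`), and its annihilator
(the colon ideal `M (i+1) : (r i)`) is the prime ideal of the component of `Spec A`
corresponding to the facet `F i`, namely the ideal generated by the variables not in
`F i`. -/
theorem stanley_reisner_shelling (V : Type*) [Fintype V] [DecidableEq V]
    (kk : Type*) [Field kk]
    (Δ : Finset (Finset V))
    (hdown : ∀ F ∈ Δ, ∀ G ⊆ F, G ∈ Δ)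
    (m d1 : ℕ) (F : Fin m → Finset V)
    (hFinj : Function.Injective F)
    (hfacet : ∀ i, F i ∈ Δ ∧ ∀ G ∈ Δ, F i ⊆ G → G = F i)
    (hall : ∀ G ∈ Δ, ∃ i, G ⊆ F i)
    (hpure : ∀ i, (F i).card = d1)
    (hshell : ∀ i : Fin m, ∀ G ⊆ F i, (∃ j, j < i ∧ G ⊆ F j) →
      ∃ G', G ⊆ G' ∧ G' ⊆ F i ∧ G'.card = d1 - 1 ∧ ∃ j, j < i ∧ G' ⊆ F j)
    (I : Ideal (MvPolynomial V kk))
    (hI : I = Ideal.span ((fun G : Finset V => ∏ v ∈ G, X v) '' {G | G ∉ Δ}))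
    (r : Fin m → MvPolynomial V kk ⧸ I)
    (hr : ∀ i, r i = Ideal.Quotient.mk I
      (∏ v ∈ (F i).filter (fun v => ∃ j, j < i ∧ (F i).erase v ⊆ F j), X v))
    (M : ℕ → Ideal (MvPolynomial V kk ⧸ I))
    (hM : ∀ n, M n = Ideal.span {x | ∃ j : Fin m, n ≤ (j : ℕ) ∧ x = r j}) :
    ∀ i : Fin m,
      M i = M ((i : ℕ) + 1) ⊔ Ideal.span {r i} ∧
      Submodule.colon (M ((i : ℕ) + 1)) (Ideal.span {r i})
        = Ideal.span ((fun v => Ideal.Quotient.mk I (X v)) '' {v | v ∉ F i}) ∧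
      (Ideal.span ((fun v => Ideal.Quotient.mk I (X v)) '' {v | v ∉ F i})).IsPrime :=
  stanley_reisner_shelling_general V kk Δ hdown m d1 F hFinj hfacet hall hpure hshell I hI r hr M hM
end

section
/- Let R be a polynomial ring with a term-order weighting, I ⊆ R an ideal, A = R/I, P an index set, M ≤ A^P an A-submodule with pullback M̃ ≤ R^P. Then any Gröbner basis of M̃ ≤ R^P descends to a generating set of the init(A)-module init(M) := init(A) ⊗_R init(M̃) inside init(A)^P, where init(A) = R/init(I). -/
open MvPolynomial

set_option synthInstance.maxHeartbeats 1600000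
set_option maxHeartbeats 3200000

noncomputable section

variable {k : Type*} [Field k] {σ : Type*} {P : Type*}

/-- The weight of a monomial, for the (partial) term order determined by weights
`wv` on the variables. -/
def wtMon (wv : σ → ℕ) (m : σ →₀ ℕ) : ℕ :=
  m.sum fun s e => e * wv s

/-- The minimal weight of the monomials of a polynomial (`⊤` for the zero
polynomial). -/
def minWt (wv : σ → ℕ) (f : MvPolynomial σ k) : ℕ∞ :=
  f.support.inf fun m => (wtMon wv m : ℕ∞)

/-- The initial form of a polynomial: the sum of its terms of minimal weight. -/
def initPoly (wv : σ → ℕ) (f : MvPolynomial σ k) : MvPolynomial σ k :=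
  ∑ m ∈ f.support.filter (fun m => (wtMon wv m : ℕ∞) = minWt wv f),
    monomial m (coeff m f)

/-- The initial ideal of an ideal: the ideal spanned by all initial forms. -/
def initIdeal (wv : σ → ℕ) (I : Ideal (MvPolynomial σ k)) : Ideal (MvPolynomial σ k) :=
  Ideal.span (initPoly wv '' (I : Set (MvPolynomial σ k)))

/-- The minimal weight of an element of the free module `R^P` (`P →₀ R`), where the
basis element at `p : P` is given the weight shift `shift p`. -/
def minWtVec (wv : σ → ℕ) (shift : P → ℕ) (v : P →₀ MvPolynomial σ k) : ℕ∞ :=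
  v.support.inf fun p => (shift p : ℕ∞) + minWt wv (v p)

/-- The initial form of an element of the free module `R^P`: the sum of its terms
(in each coordinate) of minimal total weight. -/
def initVec (wv : σ → ℕ) (shift : P → ℕ) (v : P →₀ MvPolynomial σ k) :
    P →₀ MvPolynomial σ k :=
  ∑ p ∈ v.support,
    Finsupp.single p
      (∑ m ∈ (v p).support.filter
          (fun m => ((shift p : ℕ∞) + (wtMon wv m : ℕ∞)) = minWtVec wv shift v),
        monomial m (coeff m (v p)))

/-- The initial submodule of a submodule of `R^P`: spanned by all initial forms. -/
def initSubmodule (wv : σ → ℕ) (shift : P → ℕ)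
    (Mt : Submodule (MvPolynomial σ k) (P →₀ MvPolynomial σ k)) :
    Submodule (MvPolynomial σ k) (P →₀ MvPolynomial σ k) :=
  Submodule.span (MvPolynomial σ k) (initVec wv shift '' (Mt : Set (P →₀ MvPolynomial σ k)))

lemma initVec_single (wv : σ → ℕ) (shift : P → ℕ) (p : P) (f : MvPolynomial σ k) :
    initVec wv shift (Finsupp.single p f) = Finsupp.single p (initPoly wv f) := by
  rcases eq_or_ne f 0 with rfl | hf
  · simp [initVec, initPoly]
  have hmin : minWtVec wv shift (Finsupp.single p f) = (shift p : ℕ∞) + minWt wv f := by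
    rw [minWtVec, Finsupp.support_single p hf, Finset.inf_singleton, Finsupp.single_eq_same]
  rw [initVec, Finsupp.support_single p hf, Finset.sum_singleton, Finsupp.single_eq_same, hmin,
    initPoly]
  congr 1
  refine Finset.sum_congr (Finset.filter_congr fun m _ => ?_) fun _ _ => rfl
  exact ⟨WithTop.add_left_cancel WithTop.coe_ne_top, congrArg _⟩

lemma single_mem_comap_mapRange_mkQ {R : Type*} [CommRing R] {I : Ideal R}
    (M : Submodule (R ⧸ I) (P →₀ R ⧸ I)) {f : R} (hf : f ∈ I) (p : P) :
    Finsupp.single p f ∈ Submodule.comap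
      (Finsupp.mapRange.linearMap (Submodule.mkQ (I : Submodule R R)))
      (M.restrictScalars R) := by
  simp [Ideal.Quotient.eq_zero_iff_mem.mpr hf]

/-- `init(f) • e_p = init(f e_p)`, so `init(I) • R^P ⊆ init(M̃)` as soon as `I • R^P ⊆ M̃`. -/
lemma initIdeal_le_colon_initSubmodule (wv : σ → ℕ) (shift : P → ℕ)
    {I : Ideal (MvPolynomial σ k)}
    {Mt : Submodule (MvPolynomial σ k) (P →₀ MvPolynomial σ k)}
    (hI : ∀ f ∈ I, ∀ p, Finsupp.single p f ∈ Mt) :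
    initIdeal wv I ≤ (initSubmodule wv shift Mt).colon Set.univ := by
  rw [initIdeal, Ideal.span_le]
  rintro _ ⟨f, hf, rfl⟩
  rw [← Submodule.top_coe (R := MvPolynomial σ k), ← Finsupp.basisSingleOne.span_eq,
    Submodule.colon_span, SetLike.mem_coe, Submodule.mem_colon]
  rintro _ ⟨p, rfl⟩
  rw [Finsupp.coe_basisSingleOne, Finsupp.smul_single_one, ← initVec_single wv shift]
  exact Submodule.subset_span ⟨_, hI f hf p, rfl⟩

theorem groebner_descends_to_initial_general (wv : σ → ℕ) (shift : P → ℕ)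
    (I : Ideal (MvPolynomial σ k))
    (M : Submodule (MvPolynomial σ k ⧸ I) (P →₀ (MvPolynomial σ k ⧸ I)))
    (Mt : Submodule (MvPolynomial σ k) (P →₀ MvPolynomial σ k))
    (hMt : Mt = Submodule.comap
      (Finsupp.mapRange.linearMap (Submodule.mkQ (I : Submodule (MvPolynomial σ k)
        (MvPolynomial σ k))))
      (M.restrictScalars (MvPolynomial σ k)))
    (G : Set (P →₀ MvPolynomial σ k))
    (hGB : Submodule.span (MvPolynomial σ k) (initVec wv shift '' G)
      = initSubmodule wv shift Mt) :
    (∀ q ∈ initIdeal wv I, ∀ v : P →₀ MvPolynomial σ k,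
        q • v ∈ initSubmodule wv shift Mt) ∧
    Submodule.map
        (Finsupp.mapRange.linearMap (Submodule.mkQ
          ((initIdeal wv I : Ideal (MvPolynomial σ k)) : Submodule (MvPolynomial σ k)
            (MvPolynomial σ k))))
        (initSubmodule wv shift Mt)
      = Submodule.span (MvPolynomial σ k)
          ((Finsupp.mapRange.linearMap (Submodule.mkQ
            ((initIdeal wv I : Ideal (MvPolynomial σ k)) : Submodule (MvPolynomial σ k)
              (MvPolynomial σ k)))) '' (initVec wv shift '' G)) := by
  have hI : ∀ f ∈ I, ∀ p, Finsupp.single p f ∈ Mt := fun f hf p =>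
    hMt ▸ single_mem_comap_mapRange_mkQ M hf p
  refine ⟨fun q hq v => ?_, by rw [← hGB, Submodule.map_span]⟩
  exact Submodule.mem_colon.mp (initIdeal_le_colon_initSubmodule wv shift hI hq) v trivial

/-- let `R` be a polynomial ring with a term-order weighting (weights
`wv` on the variables and shifts `shift` on the basis of the free module `R^P`),
`I ⊆ R` an ideal, `A = R/I`, `M ≤ A^P` an `A`-submodule with pullback `M̃ ≤ R^P`
(the preimage of `M` under the coordinatewise quotient map `R^P → A^P`).  Then any
Gröbner basis `G` of `M̃ ≤ R^P` (a subset of `M̃` whose initial forms span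
`init(M̃)`) descends to a generating set of the `init(A)`-module
`init(M) = init(A) ⊗_R init(M̃)` inside `init(A)^P`, where `init(A) = R/init(I)`:
first, `init(I)·(R^P) ⊆ init(M̃)`, so that `R^P/init(M̃)`, and in particular
`init(M)` = the image of `init(M̃)` in `init(A)^P`, are `init(A)`-modules; and second,
the images of the initial forms of the elements of `G` span that image. -/
theorem groebner_descends_to_initial (wv : σ → ℕ) (shift : P → ℕ)
    (I : Ideal (MvPolynomial σ k))
    (M : Submodule (MvPolynomial σ k ⧸ I) (P →₀ (MvPolynomial σ k ⧸ I)))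
    (Mt : Submodule (MvPolynomial σ k) (P →₀ MvPolynomial σ k))
    (hMt : Mt = Submodule.comap
      (Finsupp.mapRange.linearMap (Submodule.mkQ (I : Submodule (MvPolynomial σ k)
        (MvPolynomial σ k))))
      (M.restrictScalars (MvPolynomial σ k)))
    (G : Set (P →₀ MvPolynomial σ k)) (hG : G ⊆ Mt)
    (hGB : Submodule.span (MvPolynomial σ k) (initVec wv shift '' G)
      = initSubmodule wv shift Mt) :
    (∀ q ∈ initIdeal wv I, ∀ v : P →₀ MvPolynomial σ k,
        q • v ∈ initSubmodule wv shift Mt) ∧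
    Submodule.map
        (Finsupp.mapRange.linearMap (Submodule.mkQ
          ((initIdeal wv I : Ideal (MvPolynomial σ k)) : Submodule (MvPolynomial σ k)
            (MvPolynomial σ k))))
        (initSubmodule wv shift Mt)
      = Submodule.span (MvPolynomial σ k)
          ((Finsupp.mapRange.linearMap (Submodule.mkQ
            ((initIdeal wv I : Ideal (MvPolynomial σ k)) : Submodule (MvPolynomial σ k)
              (MvPolynomial σ k)))) '' (initVec wv shift '' G)) :=
  groebner_descends_to_initial_general wv shift I M Mt hMt G hGB

end
end
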